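/- arXiv:1309.1545 — 3 statements merged into one kernel-verified Lean document; each statement's English description precedes it below -/
import Mathlib

section
/- Let h ≥ p ≥ 1 and m ≥ 2 be integers. Then λ_{h,p,p}(T_{m,2}) = λ*_{h,p,p}(T_{m,2}) = h + (2m − 1)·p. -/
open SimpleGraph

/-- An `L(h,p,p)`-labelling of `G` with span `ℓ`: labels in `{0,…,ℓ}`, labels of vertices at
distance 1 differ by at least `h`, labels of vertices at distance 2 or 3 differ by at least `p`. -/
def IsLLabelling {V : Type} (G : SimpleGraph V) (h p ℓ : ℕ) (f : V → ℕ) : Prop :=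
  (∀ v, f v ≤ ℓ) ∧
  (∀ u v, G.dist u v = 1 → (h : ℤ) ≤ |(f u : ℤ) - (f v : ℤ)|) ∧
  (∀ u v, G.dist u v = 2 ∨ G.dist u v = 3 → (p : ℤ) ≤ |(f u : ℤ) - (f v : ℤ)|)

/-- `λ_{h,p,p}(G)`: the minimum span of an `L(h,p,p)`-labelling of `G`. -/
noncomputable def lambdaNum {V : Type} (G : SimpleGraph V) (h p : ℕ) : ℕ :=
  sInf {ℓ : ℕ | ∃ f : V → ℕ, IsLLabelling G h p ℓ f}

/-- A circular interval modulo `n`: a set of residues of the form `{a, a+1, …, a+s}` mod `n`. -/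
def IsCircInterval (n : ℕ) (I : Set (ZMod n)) : Prop :=
  ∃ (a : ZMod n) (s : ℕ), I = {x : ZMod n | ∃ i : ℕ, i ≤ s ∧ x = a + (i : ZMod n)}

/-- An elegant `L(h,p,p)`-labelling: additionally each vertex `u` has a circular interval `I u`
modulo `ℓ+1` containing the labels of all neighbours of `u`, with `I u ∩ I v = ∅` for edges `uv`. -/
def IsElegantLLabelling {V : Type} (G : SimpleGraph V) (h p ℓ : ℕ) (f : V → ℕ) : Prop :=
  IsLLabelling G h p ℓ f ∧
  ∃ I : V → Set (ZMod (ℓ + 1)),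
    (∀ u, IsCircInterval (ℓ + 1) (I u)) ∧
    (∀ u w, G.Adj u w → ((f w : ZMod (ℓ + 1)) ∈ I u)) ∧
    (∀ u v, G.Adj u v → I u ∩ I v = ∅)

/-- `λ*_{h,p,p}(G)`: the minimum span of an elegant `L(h,p,p)`-labelling of `G`. -/
noncomputable def lambdaStar {V : Type} (G : SimpleGraph V) (h p : ℕ) : ℕ :=
  sInf {ℓ : ℕ | ∃ f : V → ℕ, IsElegantLLabelling G h p ℓ f}

/-- The `ℓ`-cyclic distance between labels `a` and `b`. -/
def cycDist (ℓ a b : ℕ) : ℤ :=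
  min |(a : ℤ) - (b : ℤ)| ((ℓ : ℤ) - |(a : ℤ) - (b : ℤ)|)

/-- A `C(h,p,p)`-labelling of `G` with span `ℓ`: labels in `{0,…,ℓ-1}`, and the `ℓ`-cyclic distance
between labels of vertices at distance 1 (resp. 2 or 3) is at least `h` (resp. `p`). -/
def IsCLabelling {V : Type} (G : SimpleGraph V) (h p ℓ : ℕ) (f : V → ℕ) : Prop :=
  (∀ v, f v < ℓ) ∧
  (∀ u v, G.dist u v = 1 → (h : ℤ) ≤ cycDist ℓ (f u) (f v)) ∧
  (∀ u v, G.dist u v = 2 ∨ G.dist u v = 3 → (p : ℤ) ≤ cycDist ℓ (f u) (f v))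

/-- `σ_{h,p,p}(G)`: the minimum positive `ℓ` such that `G` has a `C(h,p,p)`-labelling of span `ℓ`. -/
noncomputable def sigmaNum {V : Type} (G : SimpleGraph V) (h p : ℕ) : ℕ :=
  sInf {ℓ : ℕ | 0 < ℓ ∧ ∃ f : V → ℕ, IsCLabelling G h p ℓ f}

/-- An elegant `C(h,p,p)`-labelling: additionally each vertex `u` has a circular interval `I u`
modulo `ℓ` containing the labels of all neighbours of `u`, with `I u ∩ I v = ∅` for edges `uv`. -/
def IsElegantCLabelling {V : Type} (G : SimpleGraph V) (h p ℓ : ℕ) (f : V → ℕ) : Prop :=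
  IsCLabelling G h p ℓ f ∧
  ∃ I : V → Set (ZMod ℓ),
    (∀ u, IsCircInterval ℓ (I u)) ∧
    (∀ u w, G.Adj u w → ((f w : ZMod ℓ) ∈ I u)) ∧
    (∀ u v, G.Adj u v → I u ∩ I v = ∅)

/-- `σ*_{h,p,p}(G)`: the minimum positive `ℓ` such that `G` has an elegant `C(h,p,p)`-labelling
of span `ℓ`. -/
noncomputable def sigmaStar {V : Type} (G : SimpleGraph V) (h p : ℕ) : ℕ :=
  sInf {ℓ : ℕ | 0 < ℓ ∧ ∃ f : V → ℕ, IsElegantCLabelling G h p ℓ f}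

/-- `Δ₂(G) = max over edges uv of (deg u + deg v)`. -/
noncomputable def deltaTwo {V : Type} (G : SimpleGraph V) [Fintype V] [DecidableRel G.Adj] : ℕ :=
  sSup {d : ℕ | ∃ u v : V, G.Adj u v ∧ d = G.degree u + G.degree v}



section WalkHelpers
variable {V : Type} {G : SimpleGraph V}

lemma walk_len1 {u v : V} (w : G.Walk u v) (hw : w.length = 1) : G.Adj u v := by
  cases w with
  | nil => simp at hw
  | cons h w' =>
    cases w' with
    | nil => exact h
    | cons h' w'' => simp [SimpleGraph.Walk.length_cons] at hw

lemma walk_len2 {u v : V} (w : G.Walk u v) (hw : w.length = 2) :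
    ∃ x, G.Adj u x ∧ G.Adj x v := by
  cases w with
  | nil => simp at hw
  | cons h w' =>
    exact ⟨_, h, walk_len1 w' (by simpa [SimpleGraph.Walk.length_cons] using hw)⟩

lemma walk_len3 {u v : V} (w : G.Walk u v) (hw : w.length = 3) :
    ∃ x y, G.Adj u x ∧ G.Adj x y ∧ G.Adj y v := by
  cases w with
  | nil => simp at hw
  | cons h w' =>
    obtain ⟨y, h1, h2⟩ := walk_len2 w' (by simpa [SimpleGraph.Walk.length_cons] using hw)
    exact ⟨_, y, h, h1, h2⟩

lemma dist_of_two {u v x : V} (hne : u ≠ v) (hnadj : ¬ G.Adj u v)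
    (h1 : G.Adj u x) (h2 : G.Adj x v) : G.dist u v = 2 := by
  have hle : G.dist u v ≤ 2 := by
    have := SimpleGraph.dist_le ((SimpleGraph.Walk.cons h1 (SimpleGraph.Walk.cons h2 SimpleGraph.Walk.nil)))
    simpa using this
  interval_cases hd : G.dist u v
  · have hr : G.Reachable u v := (h1.reachable).trans h2.reachable
    exact absurd (hr.dist_eq_zero_iff.mp hd) hne
  · exact absurd (SimpleGraph.dist_eq_one_iff_adj.mp hd) hnadj
  · rfl
end WalkHelpers

lemma dist_of_three {V : Type} {G : SimpleGraph V} {u v x y : V} (hne : u ≠ v) (hnadj : ¬ G.Adj u v)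
    (hno2 : ∀ z, G.Adj u z → ¬ G.Adj z v)
    (h1 : G.Adj u x) (h2 : G.Adj x y) (h3 : G.Adj y v) : G.dist u v = 3 := by
  have hr : G.Reachable u v := (h1.reachable).trans ((h2.reachable).trans h3.reachable)
  have hle : G.dist u v ≤ 3 := by
    have := SimpleGraph.dist_le ((SimpleGraph.Walk.cons h1 (SimpleGraph.Walk.cons h2
      (SimpleGraph.Walk.cons h3 SimpleGraph.Walk.nil))))
    simpa using this
  interval_cases hd : G.dist u v
  · exact absurd (hr.dist_eq_zero_iff.mp hd) hne
  · exact absurd (SimpleGraph.dist_eq_one_iff_adj.mp hd) hnadj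
  · obtain ⟨w, hw⟩ := hr.exists_walk_length_eq_dist
    obtain ⟨z, hz1, hz2⟩ := walk_len2 w (by rw [hw, hd])
    exact absurd hz2 (hno2 z hz1)
  · rfl

section Spread
lemma spread (p : ℕ) (S : Finset ℤ) (hne : S.Nonempty)
    (hsep : ∀ a ∈ S, ∀ b ∈ S, a ≠ b → (p:ℤ) ≤ |a - b|) :
    S.min' hne + ((S.card : ℤ) - 1) * p ≤ S.max' hne := by
  generalize hn : S.card = N
  induction N generalizing S with
  | zero => simp [Finset.card_eq_zero] at hn; subst hn; exact absurd hne (by simp)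
  | succ n ih =>
    rcases Nat.eq_zero_or_pos n with h0 | hpos
    · subst h0
      obtain ⟨a, ha⟩ := Finset.card_eq_one.mp hn
      subst ha
      simp
    · -- remove the max
      set M := S.max' hne with hM
      have hMS : M ∈ S := S.max'_mem hne
      set T := S.erase M with hT
      have hTcard : T.card = n := by
        rw [hT, Finset.card_erase_of_mem hMS, hn]; omega
      have hTne : T.Nonempty := Finset.card_pos.mp (by omega)
      have hTsep : ∀ a ∈ T, ∀ b ∈ T, a ≠ b → (p:ℤ) ≤ |a - b| := by
        intro a ha b hb hab
        exact hsep a (Finset.mem_of_mem_erase ha) b (Finset.mem_of_mem_erase hb) hab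
      have hih := ih T hTne hTsep hTcard
      have hminT : S.min' hne ≤ T.min' hTne := by
        apply Finset.le_min'
        intro y hy
        exact S.min'_le y (Finset.mem_of_mem_erase hy)
      have hmaxT : T.max' hTne + p ≤ M := by
        have hmem : T.max' hTne ∈ T := T.max'_mem hTne
        have hne' : T.max' hTne ≠ M := Finset.ne_of_mem_erase hmem
        have hle : T.max' hTne ≤ M := S.le_max' _ (Finset.mem_of_mem_erase hmem)
        have := hsep _ (Finset.mem_of_mem_erase hmem) M hMS hne'
        rw [abs_sub_comm, abs_of_nonneg (by omega)] at this
        omega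
      push_cast
      nlinarith [hminT, hmaxT, hih]
end Spread

section Hole
variable {V : Type} [DecidableEq V]

lemma hole_bound (p h : ℕ) (ℓ : ℤ) (Q : Finset V) (F : V → ℤ)
    (hp : 1 ≤ p)
    (h0 : ∀ v ∈ Q, 0 ≤ F v) (hl : ∀ v ∈ Q, F v ≤ ℓ)
    (hsep : ∀ u ∈ Q, ∀ v ∈ Q, u ≠ v → (p:ℤ) ≤ |F u - F v|)
    (x : V) (hx : x ∈ Q)
    (hhole : ∀ w ∈ Q, ¬(F x < F w ∧ F w < F x + h))
    (habove : ∃ w ∈ Q, F x < F w) :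
    (h : ℤ) + ((Q.card : ℤ) - 2) * p ≤ ℓ := by
  classical
  set A := Q.filter (fun v => F v ≤ F x) with hA
  set B := Q.filter (fun v => F x < F v) with hB
  have hcards : A.card + B.card = Q.card := by
    rw [hA, hB]
    have := Finset.card_filter_add_card_filter_not (s := Q) (p := fun v => F v ≤ F x)
    rw [← this]
    congr 1
    congr 1
    apply Finset.filter_congr
    intro v hv
    simp only [not_le, eq_iff_iff]
  have hinj : ∀ u ∈ Q, ∀ v ∈ Q, F u = F v → u = v := by
    intro u hu v hv huv
    by_contra hne
    have := hsep u hu v hv hne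
    rw [huv] at this
    simp at this
    omega
  -- images
  set SA := A.image F with hSA
  set SB := B.image F with hSB
  have hAne : A.Nonempty := ⟨x, by simp [hA, hx]⟩
  have hBne : B.Nonempty := by
    obtain ⟨w, hw, hw'⟩ := habove
    exact ⟨w, by simp [hB, hw, hw']⟩
  have hSAne : SA.Nonempty := hAne.image F
  have hSBne : SB.Nonempty := hBne.image F
  have hsubA : A ⊆ Q := Finset.filter_subset _ _
  have hsubB : B ⊆ Q := Finset.filter_subset _ _
  have hcardA : SA.card = A.card :=
    Finset.card_image_of_injOn (fun u hu v hv huv => hinj u (hsubA hu) v (hsubA hv) huv)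
  have hcardB : SB.card = B.card :=
    Finset.card_image_of_injOn (fun u hu v hv huv => hinj u (hsubB hu) v (hsubB hv) huv)
  have hsepIm : ∀ (S : Finset V), S ⊆ Q → ∀ a ∈ S.image F, ∀ b ∈ S.image F, a ≠ b →
      (p:ℤ) ≤ |a - b| := by
    intro S hS a ha b hb hab
    obtain ⟨u, hu, rfl⟩ := Finset.mem_image.mp ha
    obtain ⟨v, hv, rfl⟩ := Finset.mem_image.mp hb
    exact hsep u (hS hu) v (hS hv) (fun e => hab (e ▸ rfl))
  have hchainA := spread p SA hSAne (hsepIm A hsubA)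
  have hchainB := spread p SB hSBne (hsepIm B hsubB)
  -- bounds
  have hminA : 0 ≤ SA.min' hSAne := by
    obtain ⟨u, hu, he⟩ := Finset.mem_image.mp (SA.min'_mem hSAne)
    rw [← he]; exact h0 u (hsubA hu)
  have hmaxA : SA.max' hSAne ≤ F x := by
    obtain ⟨u, hu, he⟩ := Finset.mem_image.mp (SA.max'_mem hSAne)
    rw [← he]; exact (Finset.mem_filter.mp hu).2
  have hminB : F x + h ≤ SB.min' hSBne := by
    obtain ⟨u, hu, he⟩ := Finset.mem_image.mp (SB.min'_mem hSBne)
    rw [← he]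
    have hu' := Finset.mem_filter.mp hu
    have := hhole u (hsubB hu)
    push_neg at this
    exact this hu'.2
  have hmaxB : SB.max' hSBne ≤ ℓ := by
    obtain ⟨u, hu, he⟩ := Finset.mem_image.mp (SB.max'_mem hSBne)
    rw [← he]; exact hl u (hsubB hu)
  have hcA : 1 ≤ A.card := Finset.card_pos.mpr hAne
  have hcB : 1 ≤ B.card := Finset.card_pos.mpr hBne
  have e1 : ((A.card : ℤ) - 1) * p ≤ F x := by
    rw [hcardA] at hchainA; nlinarith [hchainA, hminA, hmaxA]
  have e2 : F x + h + ((B.card : ℤ) - 1) * p ≤ ℓ := by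
    rw [hcardB] at hchainB; nlinarith [hchainB, hminB, hmaxB]
  have : (Q.card : ℤ) = (A.card : ℤ) + B.card := by exact_mod_cast hcards.symm
  rw [this]
  nlinarith [e1, e2]
end Hole

section Structure
variable {V : Type} {G : SimpleGraph V} {r : V}

lemma trichotomy (hT : G.IsTree) (hball : ∀ v : V, G.dist r v ≤ 2) (v : V) :
    v = r ∨ G.Adj r v ∨ G.dist r v = 2 := by
  have h := hball v
  interval_cases hd : G.dist r v
  · exact Or.inl (((hT.isConnected.dist_eq_zero_iff).mp hd).symm)
  · exact Or.inr (Or.inl (SimpleGraph.dist_eq_one_iff_adj.mp hd))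
  · exact Or.inr (Or.inr rfl)

lemma children_not_adj (hT : G.IsTree) {c c' : V} (hc : G.Adj r c) (hc' : G.Adj r c') :
    ¬ G.Adj c c' := by
  intro hadj
  have hP := hT.existsUnique_path c c'
  have hP1 : (SimpleGraph.Walk.cons hadj SimpleGraph.Walk.nil).IsPath := by
    simp [SimpleGraph.Walk.isPath_def, hadj.ne]
  have hP2 : (SimpleGraph.Walk.cons hc.symm (SimpleGraph.Walk.cons hc' SimpleGraph.Walk.nil)).IsPath := by
    simp [SimpleGraph.Walk.isPath_def]
    exact ⟨⟨hc.ne', hadj.ne⟩, hc'.ne⟩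
  have := (hP.unique hP1 hP2)
  have := congrArg SimpleGraph.Walk.length this
  simp at this
end Structure

lemma unique_parent {V : Type} {G : SimpleGraph V} {r : V} (hT : G.IsTree)
    (hball : ∀ v : V, G.dist r v ≤ 2) {v : V} (hv : G.dist r v = 2) :
    ∃ c, G.Adj r c ∧ G.Adj c v ∧ ∀ w, G.Adj w v → w = c := by
  have hrv : r ≠ v := by
    intro e; rw [e] at hv; simp [SimpleGraph.dist_self] at hv
  have hnadj : ¬ G.Adj r v := by
    intro hadj
    rw [SimpleGraph.dist_eq_one_iff_adj.mpr hadj] at hv; omega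
  obtain ⟨w, hw⟩ := (SimpleGraph.Reachable.of_dist_ne_zero (by omega)).exists_walk_length_eq_dist
    (G := G) (u := r) (v := v)
  obtain ⟨c, hc1, hc2⟩ := walk_len2 w (by rw [hw, hv])
  refine ⟨c, hc1, hc2, ?_⟩
  -- auxiliary: any leaf has a child neighbour
  have leafnbr : ∀ u : V, G.dist r u = 2 → ∃ x, G.Adj r x ∧ G.Adj x u := by
    intro u hu
    obtain ⟨w', hw'⟩ := (SimpleGraph.Reachable.of_dist_ne_zero (by omega)).exists_walk_length_eq_dist
      (G := G) (u := r) (v := u)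
    exact walk_len2 w' (by rw [hw', hu])
  intro x hxv
  rcases trichotomy hT hball x with rfl | hx | hx
  · exact absurd hxv hnadj
  · -- x is a child, adjacent to v : unique path r → v of length 2
    by_contra hne
    have hP := hT.existsUnique_path r v
    have hP1 : (SimpleGraph.Walk.cons hc1 (SimpleGraph.Walk.cons hc2 SimpleGraph.Walk.nil)).IsPath := by
      simp [SimpleGraph.Walk.isPath_def]
      exact ⟨⟨hc1.ne, hrv⟩, hc2.ne⟩
    have hP2 : (SimpleGraph.Walk.cons hx (SimpleGraph.Walk.cons hxv SimpleGraph.Walk.nil)).IsPath := by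
      simp [SimpleGraph.Walk.isPath_def]
      exact ⟨⟨hx.ne, hrv⟩, hxv.ne⟩
    have := (hP.unique hP1 hP2)
    have := congrArg SimpleGraph.Walk.support this
    simp at this
    exact hne this.symm
  · -- x is a leaf adjacent to v : build two paths r → x of different lengths
    exfalso
    obtain ⟨y, hy1, hy2⟩ := leafnbr x hx
    have hcx : c ≠ x := by
      intro e
      rw [SimpleGraph.dist_eq_one_iff_adj.mpr (e ▸ hc1)] at hx; omega
    have hrx : r ≠ x := by
      intro e; rw [← e] at hx; simp [SimpleGraph.dist_self] at hx
    have hvx : v ≠ x := hxv.ne'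
    have hP := hT.existsUnique_path r x
    have hP1 : (SimpleGraph.Walk.cons hy1 (SimpleGraph.Walk.cons hy2 SimpleGraph.Walk.nil)).IsPath := by
      simp [SimpleGraph.Walk.isPath_def]
      exact ⟨⟨hy1.ne, hrx⟩, hy2.ne⟩
    have hP2 : (SimpleGraph.Walk.cons hc1 (SimpleGraph.Walk.cons hc2
        (SimpleGraph.Walk.cons hxv.symm SimpleGraph.Walk.nil))).IsPath := by
      simp [SimpleGraph.Walk.isPath_def]
      constructor
      · exact ⟨hc1.ne, hrv, hrx⟩
      · exact ⟨⟨hc2.ne, hcx⟩, hvx⟩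
    have := (hP.unique hP1 hP2)
    have := congrArg SimpleGraph.Walk.length this
    simp at this

lemma lower_bound {V : Type} [Fintype V] (G : SimpleGraph V) [DecidableRel G.Adj]
    (hT : G.IsTree) (m : ℕ) (hm : 2 ≤ m) (r : V)
    (hr : G.degree r = m)
    (hnbr : ∀ v : V, G.Adj r v → G.degree v = m + 1)
    (hball : ∀ v : V, G.dist r v ≤ 2)
    (h p ℓ : ℕ) (hp : 1 ≤ p) (hph : p ≤ h) (f : V → ℕ)
    (hf : IsLLabelling G h p ℓ f) : h + (2 * m - 1) * p ≤ ℓ := by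
  classical
  by_contra hcon
  push_neg at hcon
  zify [show 1 ≤ 2*m by omega] at hcon
  obtain ⟨hf1, hf2, hf3⟩ := hf
  set F : V → ℤ := fun v => (f v : ℤ) with hFdef
  set N := G.neighborFinset r with hNdef
  have hNmem : ∀ {c : V}, c ∈ N ↔ G.Adj r c := by
    intro c; rw [hNdef]; exact SimpleGraph.mem_neighborFinset (G := G) (v := r) c
  have hNcard : N.card = m := by
    rw [hNdef, G.card_neighborFinset_eq_degree, hr]
  set S : V → Finset V := fun c => (G.neighborFinset c).erase r with hSdef
  have hSmem : ∀ {c x : V}, x ∈ S c ↔ (x ≠ r ∧ G.Adj c x) := by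
    intro c x
    rw [hSdef]
    simp [Finset.mem_erase, G.mem_neighborFinset]
  have hSdist : ∀ {c : V}, G.Adj r c → ∀ {x : V}, x ∈ S c → G.dist r x = 2 := by
    intro c hc x hx
    obtain ⟨hxr, hcx⟩ := hSmem.mp hx
    rcases trichotomy hT hball x with rfl | hx1 | hx2
    · exact absurd rfl hxr
    · exact absurd hcx (children_not_adj hT hc hx1)
    · exact hx2
  have hScard : ∀ {c : V}, G.Adj r c → (S c).card = m := by
    intro c hc
    rw [hSdef]
    simp only
    rw [Finset.card_erase_of_mem (by rw [G.mem_neighborFinset]; exact hc.symm)]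
    rw [G.card_neighborFinset_eq_degree, hnbr c hc]
    omega
  have hup : ∀ {x : V}, G.dist r x = 2 → ∃ c, G.Adj r c ∧ G.Adj c x ∧ ∀ w, G.Adj w x → w = c :=
    fun {x} hx => unique_parent hT hball hx
  have hparent : ∀ {c x : V}, G.Adj r c → x ∈ S c → ∀ w, G.Adj w x → w = c := by
    intro c x hc hx w hw
    obtain ⟨cx, _, hcx2, hcxu⟩ := hup (hSdist hc hx)
    rw [hcxu w hw, ← hcxu c (hSmem.mp hx).2]
  -- distance facts
  have d_rc : ∀ {c : V}, c ∈ N → G.dist r c = 1 :=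
    fun {c} hc => SimpleGraph.dist_eq_one_iff_adj.mpr (hNmem.mp hc)
  have d_cc : ∀ {c c' : V}, c ∈ N → c' ∈ N → c ≠ c' → G.dist c c' = 2 := by
    intro c c' hc hc' hne
    exact dist_of_two hne (children_not_adj hT (hNmem.mp hc) (hNmem.mp hc'))
      (hNmem.mp hc).symm (hNmem.mp hc')
  have d_cS : ∀ {c x : V}, c ∈ N → x ∈ S c → G.dist c x = 1 :=
    fun {c x} hc hx => SimpleGraph.dist_eq_one_iff_adj.mpr (hSmem.mp hx).2
  have d_c'S : ∀ {c c' x : V}, c ∈ N → c' ∈ N → c' ≠ c → x ∈ S c → G.dist c' x = 3 := by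
    intro c c' x hc hc' hne hx
    have hcadj := hNmem.mp hc
    have hc'adj := hNmem.mp hc'
    have hxd := hSdist hcadj hx
    have hc'x : c' ≠ x := by
      intro e
      rw [← e] at hxd
      rw [SimpleGraph.dist_eq_one_iff_adj.mpr hc'adj] at hxd; omega
    have hnadj : ¬ G.Adj c' x := by
      intro hadj
      exact hne (hparent hcadj hx c' hadj)
    have hno2 : ∀ z, G.Adj c' z → ¬ G.Adj z x := by
      intro z hz1 hz2
      have := hparent hcadj hx z hz2
      subst this
      exact (children_not_adj hT hc'adj hcadj) hz1
    exact dist_of_three hc'x hnadj hno2 hc'adj.symm hcadj (hSmem.mp hx).2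
  have d_SS : ∀ {c x x' : V}, c ∈ N → x ∈ S c → x' ∈ S c → x ≠ x' → G.dist x x' = 2 := by
    intro c x x' hc hx hx' hne
    have hcadj := hNmem.mp hc
    have hnadj : ¬ G.Adj x x' := by
      intro hadj
      have hxc : x = c := hparent hcadj hx' x hadj
      have h2 := hSdist hcadj hx
      have h1 : G.dist r c = 1 := SimpleGraph.dist_eq_one_iff_adj.mpr hcadj
      rw [hxc] at h2
      omega
    exact dist_of_two hne hnadj (hSmem.mp hx).2.symm (hSmem.mp hx').2
  -- the vertex set Q c
  set Q : V → Finset V := fun c => insert r (N ∪ S c) with hQdef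
  have hQmem : ∀ {c x : V}, x ∈ Q c ↔ (x = r ∨ x ∈ N ∨ x ∈ S c) := by
    intro c x
    rw [hQdef]; simp [Finset.mem_insert, Finset.mem_union]
  have hrQ : ∀ {c : V}, r ∈ Q c := fun {c} => hQmem.mpr (Or.inl rfl)
  have hQcard : ∀ {c : V}, c ∈ N → (Q c).card = 2*m + 1 := by
    intro c hc
    have hcadj := hNmem.mp hc
    have hdisj : Disjoint N (S c) := by
      rw [Finset.disjoint_left]
      intro x hxN hxS
      have := hSdist hcadj hxS
      rw [SimpleGraph.dist_eq_one_iff_adj.mpr (hNmem.mp hxN)] at this; omega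
    have hrnot : r ∉ N ∪ S c := by
      rw [Finset.mem_union]
      rintro (hrN | hrS)
      · exact G.irrefl (hNmem.mp hrN)
      · exact (hSmem.mp hrS).1 rfl
    rw [hQdef]
    simp only
    rw [Finset.card_insert_of_notMem hrnot, Finset.card_union_of_disjoint hdisj,
      hNcard, hScard hcadj]
    omega
  -- separation and window facts
  have con1 : ∀ u v : V, G.dist u v = 1 → (p:ℤ) ≤ |F u - F v| :=
    fun u v hd => le_trans (by exact_mod_cast hph) (hf2 u v hd)
  have con23 : ∀ u v : V, G.dist u v = 2 ∨ G.dist u v = 3 → (p:ℤ) ≤ |F u - F v| :=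
    fun u v hd => hf3 u v hd
  have sep : ∀ {c : V}, c ∈ N → ∀ u ∈ Q c, ∀ v ∈ Q c, u ≠ v → (p:ℤ) ≤ |F u - F v| := by
    intro c hc u hu v hv hne
    rcases hQmem.mp hu with rfl | hu | hu <;> rcases hQmem.mp hv with rfl | hv | hv
    · exact absurd rfl hne
    · exact con1 _ _ (d_rc hv)
    · exact con23 _ _ (Or.inl (hSdist (hNmem.mp hc) hv))
    · exact con1 _ _ (by rw [SimpleGraph.dist_comm]; exact d_rc hu)
    · exact con23 _ _ (Or.inl (d_cc hu hv hne))
    · by_cases hec : u = c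
      · subst hec; exact con1 _ _ (d_cS hc hv)
      · exact con23 _ _ (Or.inr (d_c'S hc hu hec hv))
    · exact con23 _ _ (Or.inl (by rw [SimpleGraph.dist_comm]; exact hSdist (hNmem.mp hc) hu))
    · by_cases hec : v = c
      · subst hec; exact con1 _ _ (by rw [SimpleGraph.dist_comm]; exact d_cS hc hu)
      · exact con23 _ _ (by rw [SimpleGraph.dist_comm] at *; exact Or.inr (d_c'S hc hv hec hu))
    · exact con23 _ _ (Or.inl (d_SS hc hu hv hne))
  have window : ∀ {c : V}, c ∈ N → ∀ w ∈ Q c, w ∉ N → (h:ℤ) ≤ |F w - F c| := by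
    intro c hc w hw hwN
    rcases hQmem.mp hw with rfl | hw' | hw'
    · exact hf2 _ _ (d_rc hc)
    · exact absurd hw' hwN
    · exact hf2 _ _ (by rw [SimpleGraph.dist_comm]; exact d_cS hc hw')
  -- bound applications
  have h0 : ∀ {c : V}, ∀ v ∈ Q c, (0:ℤ) ≤ F v := by intro c v _; positivity
  have hl : ∀ {c : V}, ∀ v ∈ Q c, F v ≤ (ℓ:ℤ) := by
    intro c v _
    simp only [hFdef]
    exact_mod_cast hf1 v
  have apply_hole : ∀ {c : V}, c ∈ N → ∀ x ∈ Q c,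
      (∀ w ∈ Q c, ¬(F x < F w ∧ F w < F x + h)) → (∃ w ∈ Q c, F x < F w) → False := by
    intro c hc x hx hhole habove
    have hb := hole_bound p h (ℓ:ℤ) (Q c) F hp (h0) (hl) (sep hc) x hx hhole habove
    rw [hQcard hc] at hb
    push_cast at hb
    nlinarith [hb, hcon]
  -- Step 1 : minimum child
  have hNne : N.Nonempty := by rw [← Finset.card_pos, hNcard]; omega
  obtain ⟨c₁, hc₁N, hc₁min⟩ := Finset.exists_min_image N F hNne
  have step1 : ∀ w ∈ Q c₁, F c₁ ≤ F w := by
    by_contra hcon2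
    push_neg at hcon2
    obtain ⟨w₀, hw₀Q, hw₀lt⟩ := hcon2
    set D := (Q c₁).filter (fun w => F w < F c₁) with hDdef
    have hDne : D.Nonempty := ⟨w₀, by rw [hDdef]; exact Finset.mem_filter.mpr ⟨hw₀Q, hw₀lt⟩⟩
    obtain ⟨x, hxD, hxmax⟩ := Finset.exists_max_image D F hDne
    have hxQ : x ∈ Q c₁ := (Finset.mem_filter.mp hxD).1
    have hxlt : F x < F c₁ := (Finset.mem_filter.mp hxD).2
    have hxN : x ∉ N := fun hxN => absurd (hc₁min x hxN) (by omega)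
    have hxwin : F x + h ≤ F c₁ := by
      have := window hc₁N x hxQ hxN
      rw [abs_sub_comm, abs_of_nonneg (by omega)] at this
      omega
    apply apply_hole hc₁N x hxQ
    · intro w hwQ hw
      by_cases hwlt : F w < F c₁
      · have := hxmax w (Finset.mem_filter.mpr ⟨hwQ, hwlt⟩)
        omega
      · push_neg at hwlt
        omega
    · exact ⟨c₁, hQmem.mpr (Or.inr (Or.inl hc₁N)), by omega⟩
  have hrwin : ∀ c ∈ N, (h:ℤ) ≤ |F r - F c| := fun c hc => hf2 _ _ (d_rc hc)
  have hzgt : F c₁ < F r := by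
    have h1 := step1 r hrQ
    have h2 := hrwin c₁ hc₁N
    rcases abs_cases (F r - F c₁) with ⟨he, _⟩ | ⟨he, _⟩ <;> omega
  -- Step 2 : maximum child below F r
  set N' := N.filter (fun c => F c < F r) with hN'def
  have hN'ne : N'.Nonempty := ⟨c₁, Finset.mem_filter.mpr ⟨hc₁N, hzgt⟩⟩
  obtain ⟨cm, hcmN', hcmmax⟩ := Finset.exists_max_image N' F hN'ne
  have hcmN : cm ∈ N := (Finset.mem_filter.mp hcmN').1
  have hcmlt : F cm < F r := (Finset.mem_filter.mp hcmN').2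
  have hcmwin : F cm + h ≤ F r := by
    have := hrwin cm hcmN
    rcases abs_cases (F r - F cm) with ⟨he, _⟩ | ⟨he, _⟩ <;> omega
  apply apply_hole hcmN cm (hQmem.mpr (Or.inr (Or.inl hcmN)))
  · intro w hwQ hw
    rcases hQmem.mp hwQ with rfl | hw' | hw'
    · omega
    · by_cases hwlt : F w < F r
      · have := hcmmax w (Finset.mem_filter.mpr ⟨hw', hwlt⟩)
        omega
      · push_neg at hwlt
        omega
    · have := window hcmN w hwQ (by
        intro hwN
        have := hSdist (hNmem.mp hcmN) hw'
        rw [SimpleGraph.dist_eq_one_iff_adj.mpr (hNmem.mp hwN)] at this; omega)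
      rcases abs_cases (F w - F cm) with ⟨he, _⟩ | ⟨he, _⟩ <;> omega
  · exact ⟨r, hrQ, by omega⟩

section Construction
variable {V : Type}

lemma abs_ge1 {a b c : ℕ} (hba : b + c ≤ a) : (c:ℤ) ≤ |(a:ℤ) - (b:ℤ)| := by
  have : (b:ℤ) + c ≤ a := by exact_mod_cast hba
  rw [abs_of_nonneg (by omega)]; omega

lemma abs_ge2 {a b c : ℕ} (hba : a + c ≤ b) : (c:ℤ) ≤ |(a:ℤ) - (b:ℤ)| := by
  rw [abs_sub_comm]; exact abs_ge1 hba

lemma zmod_cast_inj {L a b : ℕ} (ha : a ≤ L) (hb : b ≤ L)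
    (he : ((a:ℕ) : ZMod (L+1)) = ((b:ℕ) : ZMod (L+1))) : a = b := by
  have h1 : ((a:ℕ) : ZMod (L+1)).val = a := ZMod.val_natCast_of_lt (by omega)
  have h2 : ((b:ℕ) : ZMod (L+1)).val = b := ZMod.val_natCast_of_lt (by omega)
  rw [← h1, ← h2, he]

noncomputable def rankIn {α : Type} [DecidableEq α] (s : Finset α) (x : α) : ℕ :=
  if hx : x ∈ s then ((s.equivFin ⟨x, hx⟩ : Fin s.card) : ℕ) else 0

lemma rankIn_lt {α : Type} [DecidableEq α] {s : Finset α} {x : α} (hx : x ∈ s) : rankIn s x < s.card := by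
  rw [rankIn, dif_pos hx]
  exact (s.equivFin ⟨x, hx⟩).isLt

lemma rankIn_inj {α : Type} [DecidableEq α] {s : Finset α} {x y : α} (hx : x ∈ s) (hy : y ∈ s)
    (he : rankIn s x = rankIn s y) : x = y := by
  simp only [rankIn, dif_pos hx, dif_pos hy] at he
  have := s.equivFin.injective (Fin.ext he)
  exact Subtype.ext_iff.mp this

lemma exists_elegant [Fintype V] (G : SimpleGraph V) [DecidableRel G.Adj]
    (hT : G.IsTree) (m : ℕ) (hm : 2 ≤ m) (r : V)
    (hr : G.degree r = m)
    (hnbr : ∀ v : V, G.Adj r v → G.degree v = m + 1)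
    (hball : ∀ v : V, G.dist r v ≤ 2)
    (h p : ℕ) (hp : 1 ≤ p) (hph : p ≤ h) :
    ∃ f : V → ℕ, IsElegantLLabelling G h p (h + (2 * m - 1) * p) f := by
  classical
  set L := h + (2 * m - 1) * p with hLdef
  have hL : L = h + 2*((m-1)*p) + p := by
    have e : 2*m - 1 = 2*(m-1)+1 := by omega
    rw [hLdef, e]; ring
  have hmp : m * p = (m-1)*p + p := by
    have e : m = (m-1)+1 := by omega
    nth_rewrite 1 [e]; ring
  set N := G.neighborFinset r with hNdef
  have hNmem : ∀ {c : V}, c ∈ N ↔ G.Adj r c := by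
    intro c; rw [hNdef]; exact SimpleGraph.mem_neighborFinset (G := G) (v := r) c
  have hNcard : N.card = m := by
    rw [hNdef, G.card_neighborFinset_eq_degree, hr]
  set S : V → Finset V := fun c => (G.neighborFinset c).erase r with hSdef
  have hSmem : ∀ {c x : V}, x ∈ S c ↔ (x ≠ r ∧ G.Adj c x) := by
    intro c x
    rw [hSdef]
    simp [Finset.mem_erase, G.mem_neighborFinset]
  have hScard : ∀ {c : V}, G.Adj r c → (S c).card = m := by
    intro c hc
    rw [hSdef]
    simp only
    rw [Finset.card_erase_of_mem (by rw [G.mem_neighborFinset]; exact hc.symm)]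
    rw [G.card_neighborFinset_eq_degree, hnbr c hc]
    omega
  -- parent function
  have hex : ∀ v : V, ∃ c : V, (G.dist r v = 2 →
      (G.Adj r c ∧ G.Adj c v ∧ ∀ w, G.Adj w v → w = c)) := by
    intro v
    by_cases hv : G.dist r v = 2
    · obtain ⟨c, hc⟩ := unique_parent hT hball hv
      exact ⟨c, fun _ => hc⟩
    · exact ⟨r, fun hd => absurd hd hv⟩
  choose pa hpa using hex
  -- rank functions
  set rC : V → ℕ := fun v => rankIn N v with hrCdef
  have hrCl : ∀ {v : V}, v ∈ N → rC v < m := by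
    intro v hv
    have := rankIn_lt hv
    simp only [hrCdef]
    omega
  have hrCinj : ∀ {u v : V}, u ∈ N → v ∈ N → rC u = rC v → u = v := by
    intro u v hu hv he
    simp only [hrCdef] at he
    exact rankIn_inj hu hv he
  set rL : V → ℕ := fun v => rankIn (S (pa v)) v with hrLdef
  -- facts about leaves
  have hleaf : ∀ {v : V}, G.dist r v = 2 →
      pa v ∈ N ∧ v ∈ S (pa v) ∧ rL v < m ∧ (∀ w, G.Adj w v → w = pa v) := by
    intro v hv
    obtain ⟨hp1, hp2, hp3⟩ := hpa v hv
    have hvr : v ≠ r := by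
      intro e; rw [e] at hv; simp [SimpleGraph.dist_self] at hv
    have hvS : v ∈ S (pa v) := hSmem.mpr ⟨hvr, hp2⟩
    refine ⟨hNmem.mpr hp1, hvS, ?_, hp3⟩
    have h1 := rankIn_lt hvS
    have h2 := hScard hp1
    simp only [hrLdef]
    omega
  have hrLinj : ∀ {u v : V}, G.dist r u = 2 → G.dist r v = 2 → pa u = pa v → rL u = rL v → u = v := by
    intro u v hu hv hpe he
    have huS := (hleaf hu).2.1
    have hvS := (hleaf hv).2.1
    simp only [hrLdef, hpe] at he huS
    exact rankIn_inj huS hvS he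

  -- the labelling
  set MM : ℕ → ℕ := fun i => max (m*p) (i*p + h) with hMMdef
  set f : V → ℕ := fun v => if v = r then L else if G.Adj r v then rC v * p
    else MM (rC (pa v)) + rL v * p with hfdef
  have hfr : f r = L := by simp [hfdef]
  have hfc : ∀ {c : V}, c ∈ N → f c = rC c * p := by
    intro c hc
    have hadj := hNmem.mp hc
    simp [hfdef, hadj.ne', hadj]
  have hleafr : ∀ {v : V}, G.dist r v = 2 → v ≠ r ∧ ¬ G.Adj r v := by
    intro v hv
    constructor
    · intro e; rw [e] at hv; simp [SimpleGraph.dist_self] at hv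
    · intro hadj
      have := SimpleGraph.dist_eq_one_iff_adj.mpr hadj
      omega
  have hfx : ∀ {v : V}, G.dist r v = 2 → f v = MM (rC (pa v)) + rL v * p := by
    intro v hv
    obtain ⟨h1, h2⟩ := hleafr hv
    simp [hfdef, h1, h2]
  -- numeric facts
  have hkp : ∀ {i : ℕ}, i < m → i*p ≤ (m-1)*p := by
    intro i hi
    exact Nat.mul_le_mul_right p (by omega)
  have succ_mul_le : ∀ {i j : ℕ}, i < j → i*p + p ≤ j*p := by
    intro i j hij
    have h2 : (i+1)*p ≤ j*p := Nat.mul_le_mul_right p (by omega)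
    rw [Nat.add_mul, one_mul] at h2
    exact h2
  have hMMle : ∀ {i : ℕ}, i < m → MM i + (m-1)*p + p ≤ L := by
    intro i hi
    have h1 : i*p ≤ (m-1)*p := hkp hi
    simp only [hMMdef]
    rcases max_cases (m*p) (i*p + h) with ⟨he, _⟩ | ⟨he, _⟩ <;> rw [he] <;> omega
  have hMMge1 : ∀ {i : ℕ}, i*p + h ≤ MM i := by
    intro i; simp only [hMMdef]; exact le_max_right _ _
  have hMMge2 : ∀ {i : ℕ}, m*p ≤ MM i := by
    intro i; simp only [hMMdef]; exact le_max_left _ _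
  -- edge classification
  have edgecase : ∀ {u v : V}, G.Adj u v →
      (u = r ∧ v ∈ N) ∨ (v = r ∧ u ∈ N) ∨
      (u ∈ N ∧ G.dist r v = 2 ∧ pa v = u) ∨ (v ∈ N ∧ G.dist r u = 2 ∧ pa u = v) := by
    intro u v hadj
    rcases trichotomy hT hball u with rfl | hu | hu
    · exact Or.inl ⟨rfl, hNmem.mpr hadj⟩
    · rcases trichotomy hT hball v with rfl | hv | hv
      · exact Or.inr (Or.inl ⟨rfl, hNmem.mpr hu⟩)
      · exact absurd hadj (children_not_adj hT hu hv)
      · exact Or.inr (Or.inr (Or.inl ⟨hNmem.mpr hu, hv, ((hleaf hv).2.2.2 u hadj).symm⟩))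
    · have hv' : v = pa u := (hleaf hu).2.2.2 v hadj.symm
      refine Or.inr (Or.inr (Or.inr ⟨?_, hu, hv'.symm⟩))
      rw [hv']; exact (hleaf hu).1
  -- labelling bounds
  have hfb : ∀ v : V, f v ≤ L := by
    intro v
    rcases trichotomy hT hball v with rfl | hv | hv
    · rw [hfr]
    · rw [hfc (hNmem.mpr hv)]
      have h1 := hkp (hrCl (hNmem.mpr hv))
      omega
    · rw [hfx hv]
      have h1 := hMMle (hrCl (hleaf hv).1)
      have h2 := hkp (hleaf hv).2.2.1
      omega
  -- distance-1 gaps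
  have gap_rc : ∀ {c : V}, c ∈ N → (h:ℤ) ≤ |(f r : ℤ) - (f c : ℤ)| := by
    intro c hc
    rw [hfr, hfc hc]
    apply abs_ge1
    have h1 := hkp (hrCl hc)
    omega
  have gap_cx : ∀ {v : V}, G.dist r v = 2 → (h:ℤ) ≤ |(f (pa v) : ℤ) - (f v : ℤ)| := by
    intro v hv
    rw [hfc (hleaf hv).1, hfx hv]
    apply abs_ge2
    have h1 := hMMge1 (i := rC (pa v))
    omega
  have part2 : ∀ u v : V, G.dist u v = 1 → (h:ℤ) ≤ |(f u : ℤ) - (f v : ℤ)| := by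
    intro u v hd
    have hadj := SimpleGraph.dist_eq_one_iff_adj.mp hd
    rcases edgecase hadj with ⟨rfl, hv⟩ | ⟨rfl, hu⟩ | ⟨hu, hv, hpv⟩ | ⟨hv, hu, hpu⟩
    · exact gap_rc hv
    · rw [abs_sub_comm]; exact gap_rc hu
    · rw [← hpv]; exact gap_cx hv
    · rw [abs_sub_comm, ← hpu]; exact gap_cx hu
  have part3 : ∀ u v : V, G.dist u v = 2 ∨ G.dist u v = 3 →
      (p:ℤ) ≤ |(f u : ℤ) - (f v : ℤ)| := by
    intro u v hd
    have hne : u ≠ v := by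
      intro e; subst e
      rcases hd with h' | h' <;> (rw [SimpleGraph.dist_self] at h'; omega)
    have hnadj : ¬ G.Adj u v := by
      intro hadj
      have := SimpleGraph.dist_eq_one_iff_adj.mpr hadj
      rcases hd with h' | h' <;> omega
    rcases trichotomy hT hball u with rfl | hu | hu <;>
      rcases trichotomy hT hball v with rfl | hv | hv
    · exact absurd rfl hne
    · exact absurd hv hnadj
    · -- r vs leaf
      rw [hfr, hfx hv]
      apply abs_ge1
      have h1 := hMMle (hrCl (hleaf hv).1)
      have h2 := hkp (hleaf hv).2.2.1
      omega
    · exact absurd hu.symm hnadj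
    · -- child vs child
      have hcu := hNmem.mpr hu
      have hcv := hNmem.mpr hv
      rw [hfc hcu, hfc hcv]
      have hne' : rC u ≠ rC v := fun e => hne (hrCinj hcu hcv e)
      rcases Nat.lt_or_ge (rC u) (rC v) with h' | h'
      · exact abs_ge2 (succ_mul_le h')
      · exact abs_ge1 (succ_mul_le (by omega))
    · -- child vs leaf
      rw [hfc (hNmem.mpr hu), hfx hv]
      apply abs_ge2
      have h1 := hMMge2 (i := rC (pa v))
      have h2 := succ_mul_le (hrCl (hNmem.mpr hu))
      omega
    · -- leaf vs r
      rw [abs_sub_comm, hfr, hfx hu]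
      apply abs_ge1
      have h1 := hMMle (hrCl (hleaf hu).1)
      have h2 := hkp (hleaf hu).2.2.1
      omega
    · -- leaf vs child
      rw [abs_sub_comm, hfc (hNmem.mpr hv), hfx hu]
      apply abs_ge2
      have h1 := hMMge2 (i := rC (pa u))
      have h2 := succ_mul_le (hrCl (hNmem.mpr hv))
      omega
    · -- leaf vs leaf
      by_cases hpe : pa u = pa v
      · have hne' : rL u ≠ rL v := fun e => hne (hrLinj hu hv hpe e)
        rw [hfx hu, hfx hv, hpe]
        rcases Nat.lt_or_ge (rL u) (rL v) with h' | h'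
        · apply abs_ge2
          have := succ_mul_le h'
          omega
        · apply abs_ge1
          have := succ_mul_le (show rL v < rL u by omega)
          omega
      · exfalso
        rcases hd with h2 | h3
        · obtain ⟨w, hw⟩ := SimpleGraph.exists_walk_of_dist_ne_zero (by omega : G.dist u v ≠ 0)
          obtain ⟨z, hz1, hz2⟩ := walk_len2 w (by rw [hw, h2])
          have e1 : z = pa u := (hleaf hu).2.2.2 z hz1.symm
          have e2 : z = pa v := (hleaf hv).2.2.2 z hz2
          exact hpe (e1 ▸ e2)
        · obtain ⟨w, hw⟩ := SimpleGraph.exists_walk_of_dist_ne_zero (by omega : G.dist u v ≠ 0)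
          obtain ⟨z, y, hz1, hzy, hy1⟩ := walk_len3 w (by rw [hw, h3])
          have e1 : z = pa u := (hleaf hu).2.2.2 z hz1.symm
          have e2 : y = pa v := (hleaf hv).2.2.2 y hy1
          subst e1; subst e2
          exact children_not_adj hT (hNmem.mp (hleaf hu).1) (hNmem.mp (hleaf hv).1) hzy
  -- elegance

  set I : V → Set (ZMod (L+1)) := fun v =>
    if v = r then
      {x : ZMod (L+1) | ∃ i : ℕ, i ≤ (m-1)*p ∧ x = ((0 : ℕ) : ZMod (L+1)) + (i : ZMod (L+1))}
    else if G.Adj r v then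
      {x : ZMod (L+1) | ∃ i : ℕ, i ≤ L - MM (rC v) ∧
        x = ((MM (rC v) : ℕ) : ZMod (L+1)) + (i : ZMod (L+1))}
    else
      {x : ZMod (L+1) | ∃ i : ℕ, i ≤ 0 ∧
        x = ((rC (pa v) * p : ℕ) : ZMod (L+1)) + (i : ZMod (L+1))}
    with hIdef
  have hIr : I r = {x : ZMod (L+1) | ∃ i : ℕ, i ≤ (m-1)*p ∧
      x = ((0 : ℕ) : ZMod (L+1)) + (i : ZMod (L+1))} := by
    simp only [hIdef, if_pos rfl]
  have hIc : ∀ {c : V}, c ∈ N → I c = {x : ZMod (L+1) | ∃ i : ℕ, i ≤ L - MM (rC c) ∧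
      x = ((MM (rC c) : ℕ) : ZMod (L+1)) + (i : ZMod (L+1))} := by
    intro c hc
    have hadj := hNmem.mp hc
    simp only [hIdef, if_neg hadj.ne', if_pos hadj]
  have hIe : ∀ {v : V}, v ≠ r → ¬ G.Adj r v → I v = {x : ZMod (L+1) | ∃ i : ℕ, i ≤ 0 ∧
      x = ((rC (pa v) * p : ℕ) : ZMod (L+1)) + (i : ZMod (L+1))} := by
    intro v h1 h2
    simp only [hIdef, if_neg h1, if_neg h2]
  have hMM_le_L : ∀ {i : ℕ}, i < m → MM i ≤ L := by
    intro i hi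
    have := hMMle hi
    omega
  have hmpL : (m-1)*p ≤ L := by omega
  -- circular intervals
  have circ : ∀ u : V, IsCircInterval (L+1) (I u) := by
    intro u
    by_cases h1 : u = r
    · subst h1
      rw [hIr]
      exact ⟨_, _, rfl⟩
    · by_cases h2 : G.Adj r u
      · rw [hIc (hNmem.mpr h2)]
        exact ⟨_, _, rfl⟩
      · rw [hIe h1 h2]
        exact ⟨_, _, rfl⟩
  -- membership
  have memb : ∀ u w : V, G.Adj u w → ((f w : ZMod (L+1)) ∈ I u) := by
    intro u w hadj
    rcases edgecase hadj with ⟨rfl, hw⟩ | ⟨rfl, hu⟩ | ⟨hu, hw, hpv⟩ | ⟨hw, hu, hpu⟩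
    · -- u = r, w child
      rw [hIr]
      refine ⟨rC w * p, hkp (hrCl hw), ?_⟩
      rw [hfc hw]
      push_cast
      ring
    · -- w = r, u child
      rw [hIc hu]
      have hML := hMM_le_L (hrCl hu)
      refine ⟨L - MM (rC u), le_refl _, ?_⟩
      rw [hfr, ← Nat.cast_add]
      congr 1
      omega
    · -- u child, w leaf of u
      rw [hIc hu]
      have hML := hMMle (hrCl hu)
      have h2 := hkp (hleaf hw).2.2.1
      refine ⟨rL w * p, by omega, ?_⟩
      rw [hfx hw, hpv, ← Nat.cast_add]
    · -- u leaf, w = pa u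
      obtain ⟨h1, h2⟩ := hleafr hu
      rw [hIe h1 h2]
      refine ⟨0, le_refl _, ?_⟩
      rw [← hpu, hfc (hpu ▸ hw)]
      simp
  -- disjointness
  have disj : ∀ u v : V, G.Adj u v → I u ∩ I v = ∅ := by
    intro u v hadj
    apply Set.eq_empty_iff_forall_notMem.mpr
    rintro x ⟨hx1, hx2⟩
    rcases edgecase hadj with ⟨rfl, hv⟩ | ⟨rfl, hu⟩ | ⟨hu, hv, hpv⟩ | ⟨hv, hu, hpu⟩
    · rw [hIr] at hx1
      rw [hIc hv] at hx2
      obtain ⟨i₁, hi₁, he₁⟩ := hx1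
      obtain ⟨i₂, hi₂, he₂⟩ := hx2
      have hML := hMM_le_L (hrCl hv)
      have hMg := hMMge2 (i := rC v)
      have hcast : ((0 + i₁ : ℕ) : ZMod (L+1)) = ((MM (rC v) + i₂ : ℕ) : ZMod (L+1)) := by
        rw [Nat.cast_add, Nat.cast_add, ← he₁, ← he₂]
      have := zmod_cast_inj (by omega) (by omega) hcast
      omega
    · rw [hIr] at hx2
      rw [hIc hu] at hx1
      obtain ⟨i₁, hi₁, he₁⟩ := hx2
      obtain ⟨i₂, hi₂, he₂⟩ := hx1
      have hML := hMM_le_L (hrCl hu)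
      have hMg := hMMge2 (i := rC u)
      have hcast : ((0 + i₁ : ℕ) : ZMod (L+1)) = ((MM (rC u) + i₂ : ℕ) : ZMod (L+1)) := by
        rw [Nat.cast_add, Nat.cast_add, ← he₁, ← he₂]
      have := zmod_cast_inj (by omega) (by omega) hcast
      omega
    · -- u child, v leaf of u
      rw [hIc hu] at hx1
      obtain ⟨h1, h2⟩ := hleafr hv
      rw [hIe h1 h2] at hx2
      obtain ⟨i₂, hi₂, he₂⟩ := hx1
      obtain ⟨i₁, hi₁, he₁⟩ := hx2
      have hML := hMM_le_L (hrCl hu)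
      have hMg := hMMge2 (i := rC u)
      have hs := succ_mul_le (hrCl hu)
      have hcast : ((rC (pa v) * p + i₁ : ℕ) : ZMod (L+1)) =
          ((MM (rC u) + i₂ : ℕ) : ZMod (L+1)) := by
        rw [Nat.cast_add, Nat.cast_add, ← he₁, ← he₂]
      have hb1 : rC (pa v) * p + i₁ ≤ L := by
        rw [hpv]
        have := hkp (hrCl hu)
        omega
      have := zmod_cast_inj hb1 (by omega) hcast
      rw [hpv] at this
      omega
    · -- v child, u leaf of v
      rw [hIc hv] at hx2
      obtain ⟨h1, h2⟩ := hleafr hu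
      rw [hIe h1 h2] at hx1
      obtain ⟨i₂, hi₂, he₂⟩ := hx2
      obtain ⟨i₁, hi₁, he₁⟩ := hx1
      have hML := hMM_le_L (hrCl hv)
      have hMg := hMMge2 (i := rC v)
      have hs := succ_mul_le (hrCl hv)
      have hcast : ((rC (pa u) * p + i₁ : ℕ) : ZMod (L+1)) =
          ((MM (rC v) + i₂ : ℕ) : ZMod (L+1)) := by
        rw [Nat.cast_add, Nat.cast_add, ← he₁, ← he₂]
      have hb1 : rC (pa u) * p + i₁ ≤ L := by
        rw [hpu]
        have := hkp (hrCl hv)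
        omega
      have := zmod_cast_inj hb1 (by omega) hcast
      rw [hpu] at this
      omega
  exact ⟨f, ⟨hfb, part2, part3⟩, I, circ, memb, disj⟩

end Construction

theorem stmt7 {V : Type} [Fintype V] (G : SimpleGraph V) [DecidableRel G.Adj]
    (hT : G.IsTree) (m : ℕ) (hm : 2 ≤ m) (r : V)
    (hr : G.degree r = m)
    (hnbr : ∀ v : V, G.Adj r v → G.degree v = m + 1)
    (hball : ∀ v : V, G.dist r v ≤ 2)
    (h p : ℕ) (hp : 1 ≤ p) (hph : p ≤ h) :
    lambdaNum G h p = h + (2 * m - 1) * p ∧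
    lambdaStar G h p = h + (2 * m - 1) * p := by
  obtain ⟨f0, hf0⟩ := exists_elegant G hT m hm r hr hnbr hball h p hp hph
  have hmemL : (h + (2 * m - 1) * p) ∈ {ℓ : ℕ | ∃ f : V → ℕ, IsLLabelling G h p ℓ f} :=
    ⟨f0, hf0.1⟩
  have hmemE : (h + (2 * m - 1) * p) ∈ {ℓ : ℕ | ∃ f : V → ℕ, IsElegantLLabelling G h p ℓ f} :=
    ⟨f0, hf0⟩
  have hlb : ∀ s ∈ {ℓ : ℕ | ∃ f : V → ℕ, IsLLabelling G h p ℓ f}, h + (2 * m - 1) * p ≤ s := by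
    rintro s ⟨f, hf⟩
    exact lower_bound G hT m hm r hr hnbr hball h p s hp hph f hf
  constructor
  · rw [lambdaNum]
    exact le_antisymm (Nat.sInf_le hmemL) (le_csInf ⟨_, hmemL⟩ hlb)
  · rw [lambdaStar]
    refine le_antisymm (Nat.sInf_le hmemE) (le_csInf ⟨_, hmemE⟩ ?_)
    rintro s ⟨f, hf⟩
    exact hlb s ⟨f, hf.1⟩
end

section
/- Let T be a finite tree with diameter at least 3 and maximum degree Δ ≥ 3, and let h ≥ p ≥ 1 be integers. Then σ_{h,p,p}(T) ≥ 2h + (Δ − 1)·p. -/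
open SimpleGraph

/-- A finset of naturals whose elements are pairwise at distance at least `p`
has `max' ≥ min' + (card - 1) * p`. -/
lemma gap_aux (p : ℕ) : ∀ (n : ℕ) (B : Finset ℕ) (hB : B.Nonempty), B.card = n →
    (∀ x ∈ B, ∀ y ∈ B, x ≠ y → p ≤ max x y - min x y) →
    B.min' hB + (n - 1) * p ≤ B.max' hB := by
  intro n
  induction n with
  | zero =>
    intro B hB hc _
    rw [Finset.card_eq_zero] at hc
    subst hc
    exact absurd hB (by simp)
  | succ n ih =>
    intro B hB hc hsep
    rcases Nat.eq_zero_or_pos n with hn | hn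
    · subst hn
      simpa using B.min'_le _ (B.max'_mem hB)
    · set M := B.max' hB with hM
      set B' := B.erase M with hB'
      have hcard' : B'.card = n := by
        rw [hB', Finset.card_erase_of_mem (B.max'_mem hB)]; omega
      have hB'ne : B'.Nonempty := by
        rw [← Finset.card_pos, hcard']; omega
      have hsub : B' ⊆ B := Finset.erase_subset _ _
      have key := ih B' hB'ne hcard'
        (fun x hx y hy => hsep x (hsub hx) y (hsub hy))
      have hmle : B.min' hB ≤ B'.min' hB'ne := B.min'_le _ (hsub (B'.min'_mem hB'ne))
      have hmax'mem : B'.max' hB'ne ∈ B := hsub (B'.max'_mem hB'ne)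
      have hne : B'.max' hB'ne ≠ M := Finset.ne_of_mem_erase (B'.max'_mem hB'ne)
      have hle : B'.max' hB'ne ≤ M := B.le_max' _ hmax'mem
      have hgap := hsep _ hmax'mem M (B.max'_mem hB) hne
      rw [max_eq_right hle, min_eq_left hle] at hgap
      have hmul : (n - 1) * p + p = n * p := by
        cases n with
        | zero => exact (Nat.lt_irrefl 0 hn).elim
        | succ m => simp [Nat.succ_mul]
      calc B.min' hB + (n + 1 - 1) * p = B.min' hB + ((n - 1) * p + p) := by
            rw [Nat.add_sub_cancel, ← hmul]
        _ ≤ B'.min' hB'ne + (n - 1) * p + p := by omega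
        _ ≤ B'.max' hB'ne + p := by omega
        _ ≤ M := by omega

/-- Any span of a C(h,p,p)-labelling of a tree with `Δ ≥ 3` is at least `2h + (Δ-1)p`. -/
lemma span_lower_bound {V : Type} [Fintype V] (G : SimpleGraph V) [DecidableRel G.Adj]
    (hT : G.IsTree) (hD1 : 1 ≤ G.maxDegree) (h p ℓ : ℕ) (hp : 1 ≤ p) (hph : p ≤ h)
    (f : V → ℕ) (hf : IsCLabelling G h p ℓ f) :
    2 * h + (G.maxDegree - 1) * p ≤ ℓ := by
  classical
  have hconn : G.Connected := hT.isConnected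
  have : Nonempty V := hconn.nonempty
  obtain ⟨u, hu⟩ := G.exists_maximal_degree_vertex
  obtain ⟨hf1, hf2, hf3⟩ := hf
  set N := G.neighborFinset u with hN
  have hcardN : N.card = G.maxDegree := by
    rw [hN, G.card_neighborFinset_eq_degree, hu]
  -- distance facts
  have hdist1 : ∀ w ∈ N, G.dist u w = 1 := by
    intro w hw
    rw [hN, SimpleGraph.mem_neighborFinset] at hw
    exact SimpleGraph.dist_eq_one_iff_adj.mpr hw
  have hdist2 : ∀ w ∈ N, ∀ w' ∈ N, w ≠ w' → G.dist w w' = 2 := by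
    intro w hw w' hw' hne
    rw [hN, SimpleGraph.mem_neighborFinset] at hw hw'
    have hnadj : ¬ G.Adj w w' := by
      intro hadj
      have hwalk : (SimpleGraph.Walk.cons hw.symm
          (SimpleGraph.Walk.cons hw' SimpleGraph.Walk.nil) : G.Walk w w').IsPath := by
        simp [SimpleGraph.Walk.cons_isPath_iff, hw.ne', hw'.ne, hne]
      have := SimpleGraph.isAcyclic_iff_path_unique.mp hT.IsAcyclic
        (SimpleGraph.Path.singleton hadj) ⟨_, hwalk⟩
      have hlen := congrArg (fun q : G.Path w w' => q.1.length) this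
      simp [SimpleGraph.Path.singleton] at hlen
    have hle2 : G.dist w w' ≤ 2 := by
      have := G.dist_le (SimpleGraph.Walk.cons hw.symm
        (SimpleGraph.Walk.cons hw' SimpleGraph.Walk.nil))
      simpa using this
    have hpos : 0 < G.dist w w' := hconn.pos_dist_of_ne hne
    have hne1 : G.dist w w' ≠ 1 := fun h1 => hnadj (SimpleGraph.dist_eq_one_iff_adj.mp h1)
    omega
  -- the shifted labels
  set t : V → ℕ := fun w => if f u ≤ f w then f w - f u else f w + ℓ - f u with ht
  have hfu : f u < ℓ := hf1 u
  have claimA : ∀ w ∈ N, h ≤ t w ∧ t w + h ≤ ℓ := by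
    intro w hw
    have hcyc := hf2 u w (hdist1 w hw)
    have hfw : f w < ℓ := hf1 w
    rw [cycDist, le_min_iff] at hcyc
    obtain ⟨hc1, hc2⟩ := hcyc
    rcases abs_cases ((f u : ℤ) - (f w : ℤ)) with ⟨heq, _⟩ | ⟨heq, _⟩ <;>
      rw [heq] at hc1 hc2 <;> simp only [ht] <;> split <;> omega
  have claimB : ∀ w ∈ N, ∀ w' ∈ N, w ≠ w' → p ≤ max (t w) (t w') - min (t w) (t w') := by
    intro w hw w' hw' hne
    have hcyc := hf3 w w' (Or.inl (hdist2 w hw w' hw' hne))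
    have hfw : f w < ℓ := hf1 w
    have hfw' : f w' < ℓ := hf1 w'
    rw [cycDist, le_min_iff] at hcyc
    obtain ⟨hc1, hc2⟩ := hcyc
    rcases abs_cases ((f w : ℤ) - (f w' : ℤ)) with ⟨heq, _⟩ | ⟨heq, _⟩ <;>
      rw [heq] at hc1 hc2 <;> simp only [ht] <;> split <;> split <;>
      rcases le_total (f w) (f w') with hc | hc <;> omega
  -- the image finset
  set B : Finset ℕ := N.image t with hB
  have hinj : Set.InjOn t N := by
    intro w hw w' hw' heq
    by_contra hne
    have := claimB w hw w' hw' hne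
    simp [heq] at this
    omega
  have hcardB : B.card = G.maxDegree := by
    rw [hB, Finset.card_image_of_injOn hinj, hcardN]
  have hBne : B.Nonempty := by
    rw [← Finset.card_pos, hcardB]; omega
  have hsep : ∀ x ∈ B, ∀ y ∈ B, x ≠ y → p ≤ max x y - min x y := by
    intro x hx y hy hxy
    rw [hB, Finset.mem_image] at hx hy
    obtain ⟨w, hw, rfl⟩ := hx
    obtain ⟨w', hw', rfl⟩ := hy
    exact claimB w hw w' hw' (fun hww => hxy (by rw [hww]))
  have hgap := gap_aux p G.maxDegree B hBne hcardB hsep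
  have hminh : h ≤ B.min' hBne := by
    obtain ⟨w, hw, heq⟩ := Finset.mem_image.mp (B.min'_mem hBne)
    rw [← heq]
    exact (claimA w hw).1
  have hmaxh : B.max' hBne + h ≤ ℓ := by
    obtain ⟨w, hw, heq⟩ := Finset.mem_image.mp (B.max'_mem hBne)
    rw [← heq]
    exact (claimA w hw).2
  generalize hq : (G.maxDegree - 1) * p = q at hgap ⊢
  omega

theorem stmt9 {V : Type} [Fintype V] (G : SimpleGraph V) [DecidableRel G.Adj]
    (hT : G.IsTree) (hdiam : ∃ u v : V, 3 ≤ G.dist u v) (hD : 3 ≤ G.maxDegree)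
    (h p : ℕ) (hp : 1 ≤ p) (hph : p ≤ h) :
    2 * h + (G.maxDegree - 1) * p ≤ sigmaNum G h p := by
  classical
  obtain ⟨u0, v0, hd3⟩ := hdiam
  have hne0 : u0 ≠ v0 := by
    intro heq; rw [heq, SimpleGraph.dist_self] at hd3; omega
  have hnontriv : Nontrivial V := ⟨u0, v0, hne0⟩
  have hh : 1 ≤ h := le_trans hp hph
  -- nonemptiness of the set: spread all vertices h apart
  set n := Fintype.card V with hn
  have hn2 : 2 ≤ n := Fintype.one_lt_card
  have hnonempty : {ℓ : ℕ | 0 < ℓ ∧ ∃ f : V → ℕ, IsCLabelling G h p ℓ f}.Nonempty := by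
    refine ⟨n * h, ?_, fun v => ((Fintype.equivFin V) v : ℕ) * h, ?_, ?_, ?_⟩
    · positivity
    · intro v
      have := ((Fintype.equivFin V) v).isLt
      exact (Nat.mul_lt_mul_right (show 0 < h by omega)).mpr this
    all_goals {
      intro x y hd
      have hxy : x ≠ y := by
        intro heq
        rw [heq, SimpleGraph.dist_self] at hd
        first | omega | (rcases hd with hd | hd <;> omega)
      have hij : ((Fintype.equivFin V) x : ℕ) ≠ ((Fintype.equivFin V) y : ℕ) := by
        intro heq
        exact hxy ((Fintype.equivFin V).injective (Fin.val_injective heq))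
      set i := ((Fintype.equivFin V) x : ℕ) with hi
      set j := ((Fintype.equivFin V) y : ℕ) with hj
      have hilt : i < n := ((Fintype.equivFin V) x).isLt
      have hjlt : j < n := ((Fintype.equivFin V) y).isLt
      rw [cycDist, le_min_iff]
      have habs : |(↑(i * h) : ℤ) - (↑(j * h) : ℤ)| = |(i : ℤ) - (j : ℤ)| * h := by
        push_cast
        rw [← sub_mul, abs_mul, abs_of_nonneg (by positivity : (0:ℤ) ≤ (h:ℤ))]
      rw [habs]
      have h1 : 1 ≤ |(i : ℤ) - (j : ℤ)| := by
        rcases abs_cases ((i : ℤ) - (j : ℤ)) with ⟨heq, _⟩ | ⟨heq, _⟩ <;> omega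
      have h2 : |(i : ℤ) - (j : ℤ)| ≤ (n : ℤ) - 1 := by
        rcases abs_cases ((i : ℤ) - (j : ℤ)) with ⟨heq, _⟩ | ⟨heq, _⟩ <;> omega
      constructor
      · nlinarith [h1, (by push_cast; omega : (0:ℤ) ≤ (h:ℤ)), hph]
      · push_cast
        nlinarith [h2, (by push_cast; omega : (0:ℤ) ≤ (h:ℤ)), hph]
    }
  apply le_csInf hnonempty
  rintro ℓ ⟨hℓpos, f, hf⟩
  exact span_lower_bound G hT (by omega) h p ℓ hp hph f hf
end

section
/- Let T be a finite tree with diameter at least 3 and maximum degree Δ ≥ 3, and let h, p ≥ 1 be integers with h ≥ Δ·p. Then T admits an elegant C(h,p,p)-labelling with span 2h + Δp − 1; consequently 2h + (Δ − 1)·p ≤ σ_{h,p,p}(T) ≤ σ*_{h,p,p}(T) ≤ 2h + Δp − 1. -/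
/-
Colour the edges of the tree properly with `Δ` colours `k`, and label modulo `L = 2h + Δp - 1` so
that `f w = f u ± (h + p·k(uw))` along every edge `uw`, the sign alternating between the two sides
of the bipartition. Both steps use that on a tree every antisymmetric edge function is a difference
of potentials. Labels at distance 1, 2 and 3 then differ, up to sign, by `h + pk`, `p(k - k')` and
`h + p(k₁ - k₂ + k₃)`, which lie in `[h, L - h]`, `[p, L - p]` and `[p, L - p]`; the labels of the
neighbours of `u` lie in the interval `f u ± [h, h + Δp - 1]`, and these intervals are disjoint
along each edge.
For the lower bound, the `Δ` neighbours of a vertex `u` of maximum degree have labels in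
`f u + [h, ℓ - h]` modulo `ℓ`, pairwise at least `p` apart, so `(Δ - 1)p ≤ ℓ - 2h`.
-/

open SimpleGraph

lemma Finset.card_mul_le_of_separated {ι : Type*} {s : Finset ι} {g : ι → ℕ} {a b p : ℕ}
    (hg : ∀ i ∈ s, a ≤ g i ∧ g i ≤ b)
    (hsep : ∀ i ∈ s, ∀ j ∈ s, i ≠ j → g i + p ≤ g j ∨ g j + p ≤ g i) :
    s.card * p ≤ b + p - a := by
  have hdisj : (s : Set ι).PairwiseDisjoint fun i => Finset.Ico (g i) (g i + p) := by
    intro i hi j hj hij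
    refine Finset.disjoint_left.mpr fun x hxi hxj => ?_
    simp only [Finset.mem_Ico] at hxi hxj
    have := hsep i hi j hj hij
    omega
  calc s.card * p = (s.biUnion fun i => Finset.Ico (g i) (g i + p)).card := by
        simp [Finset.card_biUnion hdisj]
    _ ≤ (Finset.Ico a (b + p)).card := by
        refine Finset.card_le_card fun x hx => ?_
        simp only [Finset.mem_biUnion, Finset.mem_Ico] at hx ⊢
        obtain ⟨i, hi, hx⟩ := hx
        have := hg i hi
        omega
    _ = b + p - a := Nat.card_Ico _ _

def signedInterval {n : ℕ} (c s : ZMod n) (m : ℕ) : Set (ZMod n) :=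
  {x | ∃ i ≤ m, x = c + s * i}

lemma isCircInterval_signedInterval {n : ℕ} {s : ZMod n} (hs : s = 1 ∨ s = -1) (c : ZMod n)
    (m : ℕ) : IsCircInterval n (signedInterval c s m) := by
  rcases hs with rfl | rfl
  · exact ⟨c, m, by simp [signedInterval]⟩
  · refine ⟨c - m, m, Set.ext fun x => ⟨?_, ?_⟩⟩ <;> rintro ⟨i, hi, rfl⟩ <;>
      refine ⟨m - i, Nat.sub_le _ _, ?_⟩ <;> push_cast [hi] <;> ring

section CycDist

lemma cycDist_comm (ℓ a b : ℕ) : cycDist ℓ a b = cycDist ℓ b a := by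
  simp only [cycDist, abs_sub_comm]

variable {ℓ : ℕ} [NeZero ℓ]

lemma cycDist_val_val (a b : ZMod ℓ) :
    cycDist ℓ a.val b.val = min ((a - b).val : ℤ) (ℓ - (a - b).val) := by
  wlog hba : b.val ≤ a.val generalizing a b
  · rw [cycDist_comm, this b a (by omega), ← neg_sub, ZMod.neg_val]
    split_ifs with h
    · rw [sub_eq_zero.mp h]; simp
    · rw [Nat.cast_sub (a - b).val_lt.le, sub_sub_cancel, min_comm]
  rw [cycDist, ZMod.val_sub hba, abs_of_nonneg (by omega)]
  push_cast [hba]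
  rfl

lemma le_cycDist_of_sub_eq {a b : ZMod ℓ} {c t : ℕ} (hab : a - b = c) (ht : 0 < t)
    (htc : t ≤ c) (hct : c + t ≤ ℓ) : (t : ℤ) ≤ cycDist ℓ a.val b.val := by
  rw [cycDist_val_val, hab, ZMod.val_cast_of_lt (by omega)]
  omega

lemma le_cycDist_of_sub_eq_mul {a b s : ZMod ℓ} (hs : s = 1 ∨ s = -1) {c t : ℕ}
    (hab : a - b = s * c) (ht : 0 < t) (htc : t ≤ c) (hct : c + t ≤ ℓ) :
    (t : ℤ) ≤ cycDist ℓ a.val b.val := by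
  rcases hs with rfl | rfl
  · exact le_cycDist_of_sub_eq (by rw [hab, one_mul]) ht htc hct
  · rw [cycDist_comm]
    exact le_cycDist_of_sub_eq (by rw [← neg_sub, hab, neg_one_mul, neg_neg]) ht htc hct

lemma val_sub_add_le_or_of_le_cycDist {a b c : ZMod ℓ} {t : ℕ}
    (ht : (t : ℤ) ≤ cycDist ℓ a.val b.val) :
    (b - c).val + t ≤ (a - c).val ∨ (a - c).val + t ≤ (b - c).val := by
  wlog hba : (b - c).val ≤ (a - c).val generalizing a b
  · rw [cycDist_comm] at ht
    exact (this ht (by omega)).symm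
  rw [cycDist_val_val, ← sub_sub_sub_cancel_right a b c, ZMod.val_sub hba] at ht
  omega

end CycDist

namespace SimpleGraph

variable {V : Type*} {G : SimpleGraph V}

lemma exists_adj_adj_of_dist_eq_two {u v : V} (huv : G.dist u v = 2) :
    ∃ a, G.Adj u a ∧ G.Adj a v := by
  obtain ⟨w, hw⟩ := exists_walk_of_dist_ne_zero (by omega : G.dist u v ≠ 0)
  refine ⟨w.getVert 1, by simpa using w.adj_getVert_succ (i := 0) (by omega), ?_⟩
  simpa [w.getVert_of_length_le (i := 2) (by omega)] using w.adj_getVert_succ (i := 1) (by omega)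

lemma exists_adj_adj_adj_of_dist_eq_three {u v : V} (huv : G.dist u v = 3) :
    ∃ a b, G.Adj u a ∧ G.Adj a b ∧ G.Adj b v := by
  obtain ⟨w, hw⟩ := exists_walk_of_dist_ne_zero (by omega : G.dist u v ≠ 0)
  refine ⟨w.getVert 1, w.getVert 2, by simpa using w.adj_getVert_succ (i := 0) (by omega),
    w.adj_getVert_succ (i := 1) (by omega), ?_⟩
  simpa [w.getVert_of_length_le (i := 3) (by omega)] using w.adj_getVert_succ (i := 2) (by omega)

lemma dist_eq_one_or_two_of_adj_of_adj {u v w : V} (hv : G.Adj u v) (hw : G.Adj u w)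
    (hvw : v ≠ w) : G.dist v w = 1 ∨ G.dist v w = 2 := by
  have := dist_le (Walk.cons hv.symm (Walk.cons hw Walk.nil))
  have := (hv.symm.reachable.trans hw.reachable).pos_dist_of_ne hvw
  simp only [Walk.length_cons, Walk.length_nil] at *
  omega

lemma exists_injOn_neighborSet {n : ℕ} [NeZero n] (u : V) [Fintype (G.neighborSet u)]
    (hu : G.degree u ≤ n) : ∃ e : V → ZMod n, (G.neighborSet u).InjOn e := by
  classical
  obtain ⟨emb⟩ : Nonempty (G.neighborSet u ↪ ZMod n) :=
    Function.Embedding.nonempty_of_card_le (by rwa [ZMod.card, card_neighborSet_eq_degree])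
  refine ⟨fun v => if hv : v ∈ G.neighborSet u then emb ⟨v, hv⟩ else 0, fun v hv v' hv' he => ?_⟩
  exact congrArg Subtype.val (emb.injective (by simpa only [dif_pos hv, dif_pos hv'] using he))

theorem IsTree.exists_potential {A : Type*} [AddCommGroup A] (hT : G.IsTree) (w : V → V → A)
    (hw : ∀ ⦃u v⦄, G.Adj u v → w v u = -w u v) :
    ∃ f : V → A, ∀ ⦃u v⦄, G.Adj u v → f v = f u + w u v := by
  obtain ⟨r⟩ := hT.connected.nonempty
  choose P hP using fun v => (hT.existsUnique_path r v).exists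
  refine ⟨fun v => ((P v).darts.map fun d => w d.fst d.snd).sum, fun u v huv => ?_⟩
  beta_reduce
  by_cases hv : v ∈ (P u).support
  · rw [hT.isAcyclic.path_concat (hP v) (hP u) huv.symm hv]
    simp [Walk.darts_concat, hw huv]
  · have hu := hT.isAcyclic.mem_support_of_ne_mem_support_of_adj_of_isPath (hP v) (hP u)
      huv.symm hv
    rw [hT.isAcyclic.path_concat (hP u) (hP v) huv hu]
    simp [Walk.darts_concat]

theorem IsTree.exists_edgeColoring [G.LocallyFinite] (hT : G.IsTree) {n : ℕ} [NeZero n]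
    (hdeg : ∀ v, G.degree v ≤ n) :
    ∃ k : V → V → ZMod n, (∀ ⦃u v⦄, G.Adj u v → k v u = k u v) ∧
      ∀ u, (G.neighborSet u).InjOn (k u) := by
  choose e he using fun u => exists_injOn_neighborSet u (hdeg u)
  -- shift the local numberings `e u` so that the two ends of every edge agree
  obtain ⟨c, hc⟩ := hT.exists_potential (fun u v => e u v - e v u) fun u v _ => by
    rw [neg_sub]
  refine ⟨fun u v => e u v + c u, fun u v huv => ?_, fun u =>
    (add_left_injective (c u)).comp_injOn (he u)⟩
  beta_reduce
  rw [hc huv]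
  abel

end SimpleGraph

variable {V : Type} {G : SimpleGraph V}

structure IsOffsetLabelling (G : SimpleGraph V) (h p Δ : ℕ) {L : ℕ} (f s : V → ZMod L)
    (k : V → V → ℕ) : Prop where
  sign_eq_or : ∀ u, s u = 1 ∨ s u = -1
  sign_adj : ∀ ⦃u v⦄, G.Adj u v → s v = -s u
  label_adj : ∀ ⦃u v⦄, G.Adj u v → f v = f u + s u * (h + p * k u v)
  offset_lt : ∀ ⦃u v⦄, G.Adj u v → k u v < Δ
  offset_injOn : ∀ u, (G.neighborSet u).InjOn (k u)

theorem SimpleGraph.IsTree.exists_isOffsetLabelling [G.LocallyFinite] (hT : G.IsTree) {Δ : ℕ}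
    [NeZero Δ] (hdeg : ∀ v, G.degree v ≤ Δ) (h p L : ℕ) :
    ∃ (f s : V → ZMod L) (k : V → V → ℕ), IsOffsetLabelling G h p Δ f s k := by
  obtain ⟨k, hk_symm, hk_inj⟩ := hT.exists_edgeColoring hdeg
  obtain ⟨r⟩ := hT.connected.nonempty
  let s : V → ZMod L := fun u => (-1) ^ G.dist r u
  have hs : ∀ ⦃u v⦄, G.Adj u v → s v = -s u := by
    intro u v huv
    rcases hT.dist_eq_dist_add_one_of_adj r huv with hd | hd <;> simp [s, hd, pow_succ]
  obtain ⟨f, hf⟩ := hT.exists_potential (fun u v => s u * (h + p * (k u v).val))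
    fun u v huv => by rw [hs huv, hk_symm huv, neg_mul]
  exact ⟨f, s, fun u v => (k u v).val,
    { sign_eq_or := fun u => neg_one_pow_eq_or _ _
      sign_adj := hs
      label_adj := hf
      offset_lt := fun _ _ _ => ZMod.val_lt _
      offset_injOn := fun u => ZMod.val_injective _ |>.comp_injOn (hk_inj u) }⟩

namespace IsOffsetLabelling

variable {h p Δ L : ℕ} {f s : V → ZMod L} {k : V → V → ℕ}

lemma mul_offset_add_le (hf : IsOffsetLabelling G h p Δ f s k) {u v : V} (huv : G.Adj u v) :
    p * k u v + p ≤ Δ * p := by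
  nlinarith [hf.offset_lt huv]

lemma le_cycDist_of_adj [NeZero L] (hf : IsOffsetLabelling G h p Δ f s k) (hp : 0 < p)
    (hph : Δ * p ≤ h) (hL : L + 1 = 2 * h + Δ * p) {u v : V} (huv : G.Adj u v) :
    (h : ℤ) ≤ cycDist L (f v).val (f u).val := by
  have := hf.mul_offset_add_le huv
  refine le_cycDist_of_sub_eq_mul (hf.sign_eq_or u) (c := h + p * k u v) ?_ (by omega)
    (by omega) (by omega)
  rw [hf.label_adj huv]
  push_cast
  ring

lemma le_cycDist_of_adj_adj [NeZero L] (hf : IsOffsetLabelling G h p Δ f s k) (hp : 0 < p)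
    (hph : Δ * p ≤ h) (hL : L + 1 = 2 * h + Δ * p) {a u v : V} (hau : G.Adj a u)
    (hav : G.Adj a v) (huv : u ≠ v) :
    (p : ℤ) ≤ cycDist L (f u).val (f v).val := by
  wlog hk : k a v < k a u generalizing u v
  · rw [cycDist_comm]
    exact this hav hau huv.symm <|
      lt_of_le_of_ne (not_lt.mp hk) fun he => huv (hf.offset_injOn a hau hav he)
  obtain ⟨c, hc⟩ : ∃ c, c + p * k a v = p * k a u :=
    ⟨_, Nat.sub_add_cancel (Nat.mul_le_mul_left p hk.le)⟩
  have := hf.mul_offset_add_le hau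
  have hcL : (c : ZMod L) = p * k a u - p * k a v := by
    rw [eq_sub_iff_add_eq]; exact_mod_cast congrArg (Nat.cast : ℕ → ZMod L) hc
  refine le_cycDist_of_sub_eq_mul (hf.sign_eq_or a) (c := c) ?_ hp ?_ (by omega)
  · rw [hf.label_adj hau, hf.label_adj hav, hcL]
    ring
  · nlinarith

lemma le_cycDist_of_adj_adj_adj [NeZero L] (hf : IsOffsetLabelling G h p Δ f s k) (hp : 0 < p)
    (hph : Δ * p ≤ h) (hL : L + 1 = 2 * h + Δ * p) {u a b v : V} (hua : G.Adj u a)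
    (hab : G.Adj a b) (hbv : G.Adj b v) :
    (p : ℤ) ≤ cycDist L (f u).val (f v).val := by
  have h1 := hf.mul_offset_add_le hua.symm
  have h2 := hf.mul_offset_add_le hab
  have h3 := hf.mul_offset_add_le hbv
  obtain ⟨c, hc⟩ : ∃ c, c + p * k a b = h + p * k a u + p * k b v :=
    ⟨_, Nat.sub_add_cancel (by omega)⟩
  have hcL : (c : ZMod L) = h + p * k a u + p * k b v - p * k a b := by
    rw [eq_sub_iff_add_eq]; exact_mod_cast congrArg (Nat.cast : ℕ → ZMod L) hc
  refine le_cycDist_of_sub_eq_mul (hf.sign_eq_or a) (c := c) ?_ hp (by omega) (by omega)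
  rw [hf.label_adj hua.symm, hf.label_adj hbv, hf.label_adj hab, hf.sign_adj hab, hcL]
  ring

theorem isCLabelling [NeZero L] (hf : IsOffsetLabelling G h p Δ f s k) (hp : 0 < p)
    (hph : Δ * p ≤ h) (hL : L + 1 = 2 * h + Δ * p) :
    IsCLabelling G h p L fun v => (f v).val := by
  refine ⟨fun v => ZMod.val_lt _,
    fun u v huv => hf.le_cycDist_of_adj hp hph hL (dist_eq_one_iff_adj.mp huv).symm, ?_⟩
  rintro u v (huv | huv)
  · obtain ⟨a, hua, hav⟩ := exists_adj_adj_of_dist_eq_two huv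
    exact hf.le_cycDist_of_adj_adj hp hph hL hua.symm hav (by rintro rfl; simp at huv)
  · obtain ⟨a, b, hua, hab, hbv⟩ := exists_adj_adj_adj_of_dist_eq_three huv
    exact hf.le_cycDist_of_adj_adj_adj hp hph hL hua hab hbv

lemma label_mem_signedInterval (hf : IsOffsetLabelling G h p Δ f s k) (hp : 0 < p) {u w : V}
    (huw : G.Adj u w) : f w ∈ signedInterval (f u + s u * (h : ZMod L)) (s u) (Δ * p - 1) := by
  have := hf.mul_offset_add_le huw
  refine ⟨p * k u w, by omega, ?_⟩
  rw [hf.label_adj huw]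
  push_cast
  ring

lemma signedInterval_inter_signedInterval [NeZero L] (hf : IsOffsetLabelling G h p Δ f s k)
    (hp : 0 < p) (hph : Δ * p ≤ h) (hL : L + 1 = 2 * h + Δ * p) {u v : V} (huv : G.Adj u v) :
    signedInterval (f u + s u * (h : ZMod L)) (s u) (Δ * p - 1) ∩
      signedInterval (f v + s v * (h : ZMod L)) (s v) (Δ * p - 1) = ∅ := by
  refine Set.eq_empty_iff_forall_notMem.mpr ?_
  rintro x ⟨⟨i, hi, rfl⟩, ⟨j, hj, hx⟩⟩
  have := hf.mul_offset_add_le huv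
  obtain ⟨c, hc⟩ : ∃ c, c + p * k u v = h + i + j := ⟨_, Nat.sub_add_cancel (by omega)⟩
  have hc0 : (c : ZMod L) = 0 := by
    have hcL : (c : ZMod L) = h + i + j - p * k u v := by
      rw [eq_sub_iff_add_eq]; exact_mod_cast congrArg (Nat.cast : ℕ → ZMod L) hc
    rw [hf.label_adj huv, hf.sign_adj huv] at hx
    rcases hf.sign_eq_or u with hs | hs <;> rw [hs] at hx
    · linear_combination hcL + hx
    · linear_combination hcL - hx
  rw [← ZMod.val_eq_zero, ZMod.val_cast_of_lt (by omega)] at hc0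
  omega

theorem isElegantCLabelling [NeZero L] (hf : IsOffsetLabelling G h p Δ f s k) (hp : 0 < p)
    (hph : Δ * p ≤ h) (hL : L + 1 = 2 * h + Δ * p) :
    IsElegantCLabelling G h p L fun v => (f v).val := by
  refine ⟨hf.isCLabelling hp hph hL,
    fun u => signedInterval (f u + s u * (h : ZMod L)) (s u) (Δ * p - 1),
    fun u => isCircInterval_signedInterval (hf.sign_eq_or u) _ _, fun u w huw => ?_,
    fun u v huv => hf.signedInterval_inter_signedInterval hp hph hL huv⟩
  rw [ZMod.natCast_zmod_val]
  exact hf.label_mem_signedInterval hp huw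

end IsOffsetLabelling

theorem IsCLabelling.two_mul_add_le {h p ℓ : ℕ} {f : V → ℕ} (hf : IsCLabelling G h p ℓ f)
    (hph : p ≤ h) (u : V) [Fintype (G.neighborSet u)] (hu : 0 < G.degree u) :
    2 * h + (G.degree u - 1) * p ≤ ℓ := by
  obtain ⟨hlt, hadj, hdist⟩ := hf
  have : NeZero ℓ := ⟨(Nat.zero_le _).trans_lt (hlt u) |>.ne'⟩
  have hval : ∀ v, (f v : ZMod ℓ).val = f v := fun v => ZMod.val_cast_of_lt (hlt v)
  set g : V → ℕ := fun w => ((f w : ZMod ℓ) - f u).val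
  have hwin : ∀ w ∈ G.neighborFinset u, h ≤ g w ∧ g w + h ≤ ℓ := by
    intro w hw
    have := hadj w u (dist_eq_one_iff_adj.mpr ((mem_neighborFinset G u w).mp hw).symm)
    rw [← hval w, ← hval u, cycDist_val_val] at this
    have := ((f w : ZMod ℓ) - f u).val_lt
    dsimp only [g]
    omega
  have hsep : ∀ v ∈ G.neighborFinset u, ∀ w ∈ G.neighborFinset u, v ≠ w →
      g v + p ≤ g w ∨ g w + p ≤ g v := by
    intro v hv w hw hvw
    rw [mem_neighborFinset] at hv hw
    have hpvw : (p : ℤ) ≤ cycDist ℓ (f v) (f w) := by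
      rcases dist_eq_one_or_two_of_adj_of_adj hv hw hvw with hd | hd
      · exact le_trans (by exact_mod_cast hph) (hadj v w hd)
      · exact hdist v w (Or.inl hd)
    rw [← hval v, ← hval w] at hpvw
    exact (val_sub_add_le_or_of_le_cycDist hpvw).symm
  obtain ⟨w, hw⟩ := Finset.card_pos.mp (G.card_neighborFinset_eq_degree u ▸ hu)
  have hcard := Finset.card_mul_le_of_separated (b := ℓ - h)
    (fun w hw => ⟨(hwin w hw).1, by have := (hwin w hw).2; omega⟩) hsep
  rw [card_neighborFinset_eq_degree] at hcard
  obtain ⟨d, hd⟩ := Nat.exists_eq_add_of_lt hu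
  have := hwin w hw
  rw [hd] at hcard ⊢
  simp only [zero_add, add_tsub_cancel_right, add_mul, one_mul] at hcard ⊢
  omega

theorem stmt10_general {V : Type} [Fintype V] (G : SimpleGraph V) [DecidableRel G.Adj]
    (hT : G.IsTree) (hD : 3 ≤ G.maxDegree)
    (h p : ℕ) (hp : 1 ≤ p) (hph : G.maxDegree * p ≤ h) :
    (∃ f : V → ℕ, IsElegantCLabelling G h p (2 * h + G.maxDegree * p - 1) f) ∧
    2 * h + (G.maxDegree - 1) * p ≤ sigmaNum G h p ∧
    sigmaNum G h p ≤ sigmaStar G h p ∧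
    sigmaStar G h p ≤ 2 * h + G.maxDegree * p - 1 := by
  have hpΔ : p ≤ G.maxDegree * p := Nat.le_mul_of_pos_left p (by omega)
  set L := 2 * h + G.maxDegree * p - 1
  have hL : 0 < L := by omega
  have : NeZero G.maxDegree := ⟨by omega⟩
  have : NeZero L := ⟨hL.ne'⟩
  obtain ⟨f, s, k, hf⟩ := hT.exists_isOffsetLabelling G.degree_le_maxDegree h p L
  have hel := hf.isElegantCLabelling hp hph (by omega)
  refine ⟨⟨_, hel⟩, le_csInf ⟨L, hL, _, hel.1⟩ ?_,
    csInf_le_csInf (OrderBot.bddBelow _) ⟨L, hL, _, hel⟩ fun ℓ ⟨hℓ, g, hg⟩ => ⟨hℓ, g, hg.1⟩,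
    Nat.sInf_le ⟨hL, _, hel⟩⟩
  rintro ℓ ⟨-, g, hg⟩
  have : Nonempty V := hT.connected.nonempty
  obtain ⟨u, hu⟩ := G.exists_maximal_degree_vertex
  rw [hu]
  exact hg.two_mul_add_le (hpΔ.trans hph) u (by omega)

theorem stmt10 {V : Type} [Fintype V] (G : SimpleGraph V) [DecidableRel G.Adj]
    (hT : G.IsTree) (hdiam : ∃ u v : V, 3 ≤ G.dist u v) (hD : 3 ≤ G.maxDegree)
    (h p : ℕ) (hp : 1 ≤ p) (hh : 1 ≤ h) (hph : G.maxDegree * p ≤ h) :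
    (∃ f : V → ℕ, IsElegantCLabelling G h p (2 * h + G.maxDegree * p - 1) f) ∧
    2 * h + (G.maxDegree - 1) * p ≤ sigmaNum G h p ∧
    sigmaNum G h p ≤ sigmaStar G h p ∧
    sigmaStar G h p ≤ 2 * h + G.maxDegree * p - 1 :=
  stmt10_general G hT hD h p hp hph
end
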